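/- arXiv:1402.3579 — 4 statements merged into one kernel-verified Lean document; each statement's English description precedes it below -/
import Mathlib

section
/- Let Δ : ℕ → ℕ → ℕ satisfy: (i) Δ(d, n) ≤ Δ(d-1, n-1) + 2·Δ(d, ⌊n/2⌋) + 2 whenever 2 ≤ d ≤ ⌊n/2⌋; (ii) Δ(d, n) ≤ Δ(d-1, n-1) whenever n < 2d and d ≥ 2; (iii) Δ(d, d) = 0 for all d; (iv) Δ(1, n) ≤ 1 for n ≥ 2; (v) Δ(2, n) ≤ n - 2; (vi) Δ(3, n) ≤ n - 3 for n ≥ 3; (vii) Δ(d, n) ≤ Δ(d, m) whenever n ≤ m. Then for all 1 ≤ d ≤ n, Δ(d, n) ≤ (n - d)^(log₂ d) (real power, with the convention that the bound is interpreted as a real number and 0^0 = 1, and Δ(1,1) = 0). -/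
/-!
Induction on `n`. For `d ≤ 3` the bound is one of the hypotheses, since `log₂ 1 = 0`,
`log₂ 2 = 1` and `m ≤ m ^ log₂ 3` for natural `m`. For `n < 2d` one passes to `(d - 1, n - 1)`,
which has the same `n - d` and a smaller exponent. For `n ≥ 2d` the Kalai–Kleitman recursion
reduces the claim, with `u = n - d ≥ D = d ≥ 4`, to
`u ^ log₂ (D - 1) + 2 ((u - D) / 2) ^ log₂ D + 2 ≤ u ^ log₂ D`.
Since `2 ^ log₂ D = D`, halving the base divides the power by `D`; after dividing by `u ^ log₂ D`
what remains is `(1 - 1/D) ^ log₂ u ≤ 1 - 2/D + 1/u`, where `log₂ u ≥ 2`, and `log₂ u ≥ 4`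
once `u ≥ D²`.
-/

open Real

lemma natCast_rpow_le_rpow_of_le (k : ℕ) {a b : ℝ} (ha : 0 < a) (hab : a ≤ b) :
    (k : ℝ) ^ a ≤ (k : ℝ) ^ b := by
  rcases Nat.eq_zero_or_pos k with rfl | hk
  · simp [zero_rpow ha.ne', zero_rpow (ha.trans_le hab).ne']
  · exact rpow_le_rpow_of_exponent_le (by exact_mod_cast hk) hab

lemma two_le_logb_two_of_four_le {x : ℝ} (hx : 4 ≤ x) : 2 ≤ logb 2 x := by
  rw [le_logb_iff_rpow_le one_lt_two (by linarith), rpow_two]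
  linarith

lemma rpow_logb_comm {b x y : ℝ} (hb : 0 < b) (hb₁ : b ≠ 1) (hx : 0 < x) (hy : 0 < y) :
    x ^ logb b y = y ^ logb b x := by
  conv_lhs => rw [← rpow_logb hb hb₁ hx]
  rw [← rpow_mul hb.le, mul_comm, rpow_mul hb.le, rpow_logb hb hb₁ hy]

lemma rpow_logb_sub_logb_le {D u : ℝ} (hD : 4 ≤ D) (hu : D ≤ u) :
    u ^ (logb 2 (D - 1) - logb 2 D) ≤ 1 - 2 / D + 1 / u := by
  have hD0 : 0 < D := by linarith
  have hu0 : 0 < u := by linarith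
  set y := 1 / D with hy
  have hy0 : 0 < y := by positivity
  have hy4 : y ≤ 1 / 4 := one_div_le_one_div_of_le (by norm_num) hD
  have hq : (D - 1) / D = 1 - y := by rw [hy]; field_simp
  rw [← logb_div (by linarith) hD0.ne', hq,
    rpow_logb_comm two_pos (by norm_num) hu0 (by linarith), show 2 / D = 2 * y by rw [hy]; ring]
  rcases le_or_gt u (D ^ 2) with hsmall | hlarge
  · calc (1 - y) ^ logb 2 u ≤ (1 - y) ^ (2 : ℝ) :=
          rpow_le_rpow_of_exponent_ge (by linarith) (by linarith)
            (two_le_logb_two_of_four_le (by linarith))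
      _ = 1 - 2 * y + y ^ 2 := by rw [rpow_two]; ring
      _ ≤ 1 - 2 * y + 1 / u := by
          rw [hy, div_pow, one_pow]
          gcongr
  · have ht : 4 ≤ logb 2 u := by
      rw [le_logb_iff_rpow_le one_lt_two hu0, rpow_ofNat]
      nlinarith
    calc (1 - y) ^ logb 2 u ≤ (1 - y) ^ (4 : ℝ) :=
          rpow_le_rpow_of_exponent_ge (by linarith) (by linarith) ht
      _ = (1 - y) ^ 4 := rpow_ofNat _ 4
      _ ≤ 1 - 2 * y := by
          nlinarith [mul_pos hy0 hy0, mul_pos (mul_pos hy0 hy0) hy0,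
            mul_nonneg hy0.le (sub_nonneg.2 hy4)]
      _ ≤ 1 - 2 * y + 1 / u := le_add_of_nonneg_right (by positivity)

theorem kalai_kleitman_inequality {D u : ℝ} (hD : 4 ≤ D) (hu : D ≤ u) :
    u ^ logb 2 (D - 1) + 2 * ((u - D) / 2) ^ logb 2 D + 2 ≤ u ^ logb 2 D := by
  have hD0 : 0 < D := by linarith
  have hu0 : 0 < u := by linarith
  set α := logb 2 D
  have hα : 2 ≤ α := two_le_logb_two_of_four_le hD
  set p := u ^ (α - 1)
  have hp : 2 ≤ p := by
    calc (2 : ℝ) ≤ u ^ (1 : ℝ) := by rw [rpow_one]; linarith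
      _ ≤ p := rpow_le_rpow_of_exponent_le (by linarith) (by linarith)
  have hup : u ^ α = p * u := by rw [← rpow_add_one hu0.ne']; ring_nf
  have hpred : u ^ logb 2 (D - 1) ≤ p * u - 2 * (p * u) / D + p := by
    calc u ^ logb 2 (D - 1) = u ^ α * u ^ (logb 2 (D - 1) - α) := by
          rw [← rpow_add hu0]; ring_nf
      _ ≤ p * u * (1 - 2 / D + 1 / u) := by
          rw [hup]
          gcongr
          exact rpow_logb_sub_logb_le hD hu
      _ = p * u - 2 * (p * u) / D + p := by field_simp
  have hhalf : 2 * ((u - D) / 2) ^ α ≤ 2 * (p * u) / D - 2 * p := by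
    have h2α : (2 : ℝ) ^ α = D := rpow_logb two_pos (by norm_num) hD0
    have hsub : (u - D) ^ α ≤ p * (u - D) := by
      calc (u - D) ^ α = (u - D) ^ (α - 1) * (u - D) := by
            rw [← rpow_add_one' (by linarith) (by linarith)]; ring_nf
        _ ≤ p * (u - D) := by
            gcongr
            exact rpow_le_rpow (by linarith) (by linarith) (by linarith)
    rw [div_rpow (by linarith) two_pos.le, h2α]
    calc 2 * ((u - D) ^ α / D) ≤ 2 * (p * (u - D) / D) := by gcongr
      _ = 2 * (p * u) / D - 2 * p := by field_simp
  linarith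

section

variable {Δ : ℕ → ℕ → ℕ}

lemma bound_of_le_pred {d n : ℕ} (hd : 3 ≤ d) (hle : Δ d n ≤ Δ (d - 1) (n - 1))
    (ih : (Δ (d - 1) (n - 1) : ℝ) ≤ ((n - 1 - (d - 1) : ℕ) : ℝ) ^ logb 2 ((d - 1 : ℕ) : ℝ)) :
    (Δ d n : ℝ) ≤ ((n - d : ℕ) : ℝ) ^ logb 2 d := by
  have hdR : (3 : ℝ) ≤ d := by exact_mod_cast hd
  rw [show n - 1 - (d - 1) = n - d by omega, Nat.cast_pred (by omega)] at ih
  calc (Δ d n : ℝ) ≤ Δ (d - 1) (n - 1) := by exact_mod_cast hle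
    _ ≤ _ := ih
    _ ≤ _ := natCast_rpow_le_rpow_of_le _ (logb_pos one_lt_two (by linarith))
        (logb_le_logb_of_le one_lt_two (by linarith) (by linarith))

lemma bound_of_kalai_kleitman {d n : ℕ} (hd : 4 ≤ d) (hn : 2 * d ≤ n)
    (hle : Δ d n ≤ Δ (d - 1) (n - 1) + 2 * Δ d (n / 2) + 2)
    (ih_pred : (Δ (d - 1) (n - 1) : ℝ) ≤ ((n - 1 - (d - 1) : ℕ) : ℝ) ^ logb 2 ((d - 1 : ℕ) : ℝ))
    (ih_half : (Δ d (n / 2) : ℝ) ≤ ((n / 2 - d : ℕ) : ℝ) ^ logb 2 d) :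
    (Δ d n : ℝ) ≤ ((n - d : ℕ) : ℝ) ^ logb 2 d := by
  have hdR : (4 : ℝ) ≤ d := by exact_mod_cast hd
  rw [show n - 1 - (d - 1) = n - d by omega, Nat.cast_pred (by omega)] at ih_pred
  have hhalf : ((n / 2 - d : ℕ) : ℝ) ≤ (((n - d : ℕ) : ℝ) - d) / 2 := by
    rw [le_div_iff₀ two_pos, le_sub_iff_add_le]
    exact_mod_cast (show (n / 2 - d) * 2 + d ≤ n - d by omega)
  calc (Δ d n : ℝ) ≤ Δ (d - 1) (n - 1) + 2 * Δ d (n / 2) + 2 := by exact_mod_cast hle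
    _ ≤ ((n - d : ℕ) : ℝ) ^ logb 2 (d - 1 : ℝ) +
        2 * ((((n - d : ℕ) : ℝ) - d) / 2) ^ logb 2 d + 2 := by
        gcongr
        exact ih_half.trans
          (rpow_le_rpow (by positivity) hhalf (logb_nonneg one_lt_two (by linarith)))
    _ ≤ _ := kalai_kleitman_inequality hdR (by exact_mod_cast (show d ≤ n - d by omega))

end

theorem stmt_1_general (Δ : ℕ → ℕ → ℕ)
    (h1 : ∀ d n, 2 ≤ d → d ≤ n / 2 → Δ d n ≤ Δ (d - 1) (n - 1) + 2 * Δ d (n / 2) + 2)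
    (h2 : ∀ d n, n < 2 * d → 2 ≤ d → Δ d n ≤ Δ (d - 1) (n - 1))
    (h3 : ∀ d, Δ d d = 0)
    (h4 : ∀ n, 2 ≤ n → Δ 1 n ≤ 1)
    (h5 : ∀ n, Δ 2 n ≤ n - 2)
    (h6 : ∀ n, 3 ≤ n → Δ 3 n ≤ n - 3) :
    ∀ d n, 1 ≤ d → d ≤ n → (Δ d n : ℝ) ≤ ((n : ℝ) - d) ^ (Real.logb 2 d) := by
  suffices H : ∀ n d, 1 ≤ d → d ≤ n → (Δ d n : ℝ) ≤ ((n - d : ℕ) : ℝ) ^ logb 2 d from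
    fun d n hd hdn => by simpa [Nat.cast_sub hdn] using H n d hd hdn
  intro n
  induction n using Nat.strong_induction_on with | _ n ih => ?_
  intro d hd hdn
  obtain rfl | rfl | rfl | hd4 : d = 1 ∨ d = 2 ∨ d = 3 ∨ 4 ≤ d := by omega
  · obtain rfl | hn := hdn.eq_or_lt
    · simp [h3]
    · simpa using h4 n hn
  · simpa using h5 n
  · have hexp : (1 : ℝ) ≤ logb 2 3 :=
      (le_logb_iff_rpow_le one_lt_two (by norm_num)).2 (by norm_num)
    calc (Δ 3 n : ℝ) ≤ (n - 3 : ℕ) := by exact_mod_cast h6 n hdn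
      _ ≤ _ := by simpa using natCast_rpow_le_rpow_of_le (n - 3) one_pos hexp
  have ih_pred := ih (n - 1) (by omega) (d - 1) (by omega) (by omega)
  rcases lt_or_ge n (2 * d) with hn | hn
  · exact bound_of_le_pred (by omega) (h2 d n hn (by omega)) ih_pred
  · exact bound_of_kalai_kleitman hd4 hn (h1 d n (by omega) (by omega)) ih_pred
      (ih (n / 2) (by omega) d hd (by omega))

theorem stmt_1 (Δ : ℕ → ℕ → ℕ)
    (h1 : ∀ d n, 2 ≤ d → d ≤ n / 2 → Δ d n ≤ Δ (d - 1) (n - 1) + 2 * Δ d (n / 2) + 2)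
    (h2 : ∀ d n, n < 2 * d → 2 ≤ d → Δ d n ≤ Δ (d - 1) (n - 1))
    (h3 : ∀ d, Δ d d = 0)
    (h4 : ∀ n, 2 ≤ n → Δ 1 n ≤ 1)
    (h5 : ∀ n, Δ 2 n ≤ n - 2)
    (h6 : ∀ n, 3 ≤ n → Δ 3 n ≤ n - 3)
    (h7 : ∀ d n m, n ≤ m → Δ d n ≤ Δ d m) :
    ∀ d n, 1 ≤ d → d ≤ n → (Δ d n : ℝ) ≤ ((n : ℝ) - d) ^ (Real.logb 2 d) :=
  stmt_1_general Δ h1 h2 h3 h4 h5 h6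
end

section
/- For all integers d ≥ 4 and n with n - d ≥ 8, the inequality (d-1)^(log₂(n-d)) + 2·d^(log₂((n-d)/2)) + 2 ≤ d^(log₂(n-d)) holds, where powers are real powers. -/
/-!
Put `x = n - d ≥ 8`, `L = log₂ x ≥ 3` and `t = d ^ L ≥ d ^ 3`. Then `d ^ log₂ (x / 2) = t / d`, and
`(d - 1) ^ L = t ((d - 1) / d) ^ L ≤ t ((d - 1) / d) ^ 3` because `(d - 1) / d < 1`. The claim thus
reduces to `t ((d - 1) / d) ^ 3 + 2 t / d + 2 ≤ t`, i.e. `t (d ^ 2 - 3 d + 1) ≥ 2 d ^ 3`, which holds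
since `t ≥ d ^ 3` and `d ^ 2 - 3 d + 1 ≥ 2` for `d ≥ 4`.
-/

open Real

lemma rpow_le_rpow_mul_div_rpow_of_le {a b k L : ℝ} (ha : 0 < a) (hab : a ≤ b) (hkL : k ≤ L) :
    a ^ L ≤ b ^ L * (a / b) ^ k := by
  have hb : 0 < b := ha.trans_le hab
  calc a ^ L = (b * (a / b)) ^ L := by rw [mul_div_cancel₀ a hb.ne']
    _ = b ^ L * (a / b) ^ L := mul_rpow hb.le (div_pos ha hb).le
    _ ≤ b ^ L * (a / b) ^ k := mul_le_mul_of_nonneg_left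
      (rpow_le_rpow_of_exponent_ge (div_pos ha hb) ((div_le_one hb).2 hab) hkL) (rpow_pos_of_pos hb L).le

lemma mul_sub_one_div_pow_three_add_le {d t : ℝ} (hd : 4 ≤ d) (ht : d ^ 3 ≤ t) :
    t * ((d - 1) / d) ^ 3 + 2 * (t / d) + 2 ≤ t := by
  have hd0 : 0 < d := by linarith
  have hquad : 2 ≤ d ^ 2 - 3 * d + 1 := by nlinarith
  have key : d ^ 3 * 2 ≤ t * (d ^ 2 - 3 * d + 1) :=
    mul_le_mul ht hquad zero_le_two ((pow_pos hd0 3).le.trans ht)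
  have heq : t - (t * ((d - 1) / d) ^ 3 + 2 * (t / d) + 2)
      = (t * (d ^ 2 - 3 * d + 1) - 2 * d ^ 3) / d ^ 3 := by
    field_simp
    ring
  have : 0 ≤ (t * (d ^ 2 - 3 * d + 1) - 2 * d ^ 3) / d ^ 3 := by
    apply div_nonneg <;> [linarith; positivity]
  linarith

lemma three_le_logb_two {x : ℝ} (hx : 8 ≤ x) : 3 ≤ logb 2 x := by
  rw [le_logb_iff_rpow_le one_lt_two (by linarith)]
  norm_num [hx]

theorem stmt_2 (d n : ℕ) (hd : 4 ≤ d) (hn : d + 8 ≤ n) :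
    ((d : ℝ) - 1) ^ (Real.logb 2 ((n : ℝ) - d))
      + 2 * (d : ℝ) ^ (Real.logb 2 (((n : ℝ) - d) / 2)) + 2
      ≤ (d : ℝ) ^ (Real.logb 2 ((n : ℝ) - d)) := by
  have hd4 : (4 : ℝ) ≤ d := by exact_mod_cast hd
  have hx8 : (8 : ℝ) ≤ n - d := by
    have : (d : ℝ) + 8 ≤ n := by exact_mod_cast hn
    linarith
  set L := logb 2 ((n : ℝ) - d)
  have hL : 3 ≤ L := three_le_logb_two hx8
  have hhalf : (d : ℝ) ^ logb 2 (((n : ℝ) - d) / 2) = d ^ L / d := by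
    rw [logb_div (by linarith) two_ne_zero, logb_self_eq_one one_lt_two,
      rpow_sub (by linarith), rpow_one]
  have hcube : (d : ℝ) ^ 3 ≤ d ^ L := by
    simpa using rpow_le_rpow_of_exponent_le (by linarith : (1 : ℝ) ≤ d) hL
  have hpow : ((d : ℝ) - 1) ^ L ≤ d ^ L * (((d : ℝ) - 1) / d) ^ 3 := by
    simpa using rpow_le_rpow_mul_div_rpow_of_le (by linarith : (0 : ℝ) < d - 1) (by linarith) hL
  rw [hhalf]
  linarith [mul_sub_one_div_pow_three_add_le hd4 hcube]
end

section
/- Let Δ : ℕ → ℕ → ℕ be monotone nondecreasing in its second argument and satisfy the Kalai–Kleitman recurrence Δ(d, n) ≤ Δ(d-1, n-1) + 2·Δ(d, ⌊n/2⌋) + 2 for 2 ≤ d ≤ ⌊n/2⌋, together with Δ(d, n) ≤ Δ(d-1, n-1) for d ≤ n < 2d with d ≥ 2, Δ(d,d) = 0, and Δ(1, n) ≤ 1 for n ≥ 2. Then Δ(d, n) ≤ n^(log₂ d + 2) for all 2 ≤ d ≤ n (real power). -/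
/-!
Induct on `n` with the bound `B(d, n) = n ^ (log₂ d + 2)`. In the recursive case `n ≥ 2d ≥ 4`,
and since `n ^ log₂ d = d ^ log₂ n`,
`B(d - 1, n) = B(d, n) · ((d - 1) / d) ^ log₂ n ≤ B(d, n) · (1 - 1/d)²`.
Moreover `2 B(d, n/2) = B(d, n) / (2d)` and `2 ≤ B(d, n) / d²` because `B(d, n) ≥ n³ ≥ 8d³`,
so the recurrence gives `Δ(d, n) ≤ B(d, n) · ((1 - 1/d)² + 1/(2d) + 1/d²) ≤ B(d, n)`.
-/

open Real

namespace KalaiKleitman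

lemma rpow_logb_comm {b x y : ℝ} (hx : 0 < x) (hy : 0 < y) :
    x ^ logb b y = y ^ logb b x := by
  rw [rpow_def_of_pos hx, rpow_def_of_pos hy, logb, logb, mul_div_left_comm]

noncomputable def kkBound (d n : ℝ) : ℝ := n ^ (logb 2 d + 2)

lemma two_le_logb_two_add_two {d : ℝ} (hd : 1 ≤ d) : 2 ≤ logb 2 d + 2 := by
  have := logb_nonneg one_lt_two hd
  linarith

lemma kkBound_nonneg (d : ℝ) {n : ℝ} (hn : 0 ≤ n) : 0 ≤ kkBound d n :=
  rpow_nonneg hn _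

lemma one_le_kkBound {d n : ℝ} (hd : 1 ≤ d) (hn : 1 ≤ n) : 1 ≤ kkBound d n :=
  one_le_rpow hn (by linarith [two_le_logb_two_add_two hd])

lemma kkBound_mono_left {d e n : ℝ} (hd : 0 < d) (hde : d ≤ e) (hn : 1 ≤ n) :
    kkBound d n ≤ kkBound e n :=
  rpow_le_rpow_of_exponent_le hn (by gcongr; norm_num)

lemma kkBound_mono_right {d n m : ℝ} (hd : 1 ≤ d) (hn : 0 ≤ n) (hnm : n ≤ m) :
    kkBound d n ≤ kkBound d m :=
  rpow_le_rpow hn hnm (by linarith [two_le_logb_two_add_two hd])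

lemma kkBound_half {d n : ℝ} (hd : 0 < d) (hn : 0 ≤ n) :
    kkBound d (n / 2) = kkBound d n / (4 * d) := by
  rw [kkBound, kkBound, div_rpow hn zero_le_two, rpow_add two_pos,
    rpow_logb two_pos (by norm_num) hd, rpow_two]
  ring

lemma kkBound_sub_one {d n : ℝ} (hd : 1 < d) (hn : 0 < n) :
    kkBound (d - 1) n = kkBound d n * ((d - 1) / d) ^ logb 2 n := by
  rw [kkBound, kkBound, ← rpow_logb_comm hn (by positivity), ← rpow_add hn,
    logb_div (by linarith) (by linarith)]
  ring_nf

lemma kkBound_natCast_sub_one_le {d n : ℕ} (hd : 2 ≤ d) (hn : 1 ≤ n) :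
    kkBound (d - 1 : ℕ) (n - 1 : ℕ) ≤ kkBound (d - 1) n := by
  have hd' : (2 : ℝ) ≤ d := by exact_mod_cast hd
  rw [Nat.cast_sub (by omega), Nat.cast_sub hn, Nat.cast_one]
  exact kkBound_mono_right (by linarith) (by simpa using hn) (by linarith)

lemma kkBound_recurrence {d n : ℝ} (hd : 2 ≤ d) (hdn : 2 * d ≤ n) :
    kkBound (d - 1) n + 2 * kkBound d (n / 2) + 2 ≤ kkBound d n := by
  set F := kkBound d n
  have hd0 : 0 < d := by linarith
  have hn0 : 0 < n := by linarith
  have hF : 0 ≤ F := kkBound_nonneg d hn0.le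
  have hpred : kkBound (d - 1) n ≤ F * ((d - 1) / d) ^ 2 := by
    rw [kkBound_sub_one (by linarith) hn0, ← rpow_two]
    have hlog : 2 ≤ logb 2 n := by
      rw [le_logb_iff_rpow_le one_lt_two hn0, rpow_two]
      nlinarith
    exact mul_le_mul_of_nonneg_left (rpow_le_rpow_of_exponent_ge
      (div_pos (by linarith) hd0) (div_le_one_of_le₀ (by linarith) hd0.le) hlog) hF
  have hhalf : 2 * kkBound d (n / 2) = F / (2 * d) := by
    rw [kkBound_half hd0 hn0.le]
    field_simp
    ring
  have hconst : 2 ≤ F / d ^ 2 := by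
    have hlog : 1 ≤ logb 2 d := by rwa [le_logb_iff_rpow_le one_lt_two hd0, rpow_one]
    have hcube : n ^ (3 : ℝ) ≤ F := rpow_le_rpow_of_exponent_le (by linarith) (by linarith)
    rw [le_div_iff₀ (by positivity)]
    have : (2 * d) ^ 3 ≤ n ^ 3 := by gcongr
    norm_cast at hcube
    nlinarith
  have hbracket : ((d - 1) / d) ^ 2 + 1 / (2 * d) + 1 / d ^ 2 ≤ 1 := by
    rw [div_pow, div_add_div _ _ (by positivity) (by positivity),
      div_add_div _ _ (by positivity) (by positivity), div_le_one (by positivity)]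
    nlinarith
  calc kkBound (d - 1) n + 2 * kkBound d (n / 2) + 2
      ≤ F * ((d - 1) / d) ^ 2 + F / (2 * d) + F / d ^ 2 := by linarith
    _ = F * (((d - 1) / d) ^ 2 + 1 / (2 * d) + 1 / d ^ 2) := by ring
    _ ≤ F := mul_le_of_le_one_right hF hbracket

end KalaiKleitman

open KalaiKleitman in
theorem stmt_6_general (Δ : ℕ → ℕ → ℕ)
    (h1 : ∀ d n, 2 ≤ d → d ≤ n / 2 → Δ d n ≤ Δ (d - 1) (n - 1) + 2 * Δ d (n / 2) + 2)
    (h2 : ∀ d n, d ≤ n → n < 2 * d → 2 ≤ d → Δ d n ≤ Δ (d - 1) (n - 1))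
    (h3 : ∀ d, Δ d d = 0)
    (h4 : ∀ n, 2 ≤ n → Δ 1 n ≤ 1) :
    ∀ d n, 2 ≤ d → d ≤ n → (Δ d n : ℝ) ≤ (n : ℝ) ^ (Real.logb 2 d + 2) := by
  intro d n
  induction n using Nat.strong_induction_on generalizing d with
  | _ n ih =>
  intro hd hdn
  change (Δ d n : ℝ) ≤ kkBound d n
  rcases hdn.eq_or_lt with rfl | hlt
  · simpa [h3] using kkBound_nonneg (d : ℝ) (Nat.cast_nonneg d)
  have hd' : (2 : ℝ) ≤ d := by exact_mod_cast hd
  have hn' : (1 : ℝ) ≤ n := by exact_mod_cast (by omega : 1 ≤ n)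
  have hpred : (Δ (d - 1) (n - 1) : ℝ) ≤ kkBound (d - 1) n := by
    obtain rfl | hd3 := hd.eq_or_lt
    · calc (Δ (2 - 1) (n - 1) : ℝ) ≤ 1 := by exact_mod_cast h4 (n - 1) (by omega)
        _ ≤ kkBound (2 - 1) n := one_le_kkBound (by norm_num) hn'
    · exact (ih (n - 1) (by omega) (d - 1) (by omega) (by omega)).trans
        (kkBound_natCast_sub_one_le hd (by omega))
  by_cases hhalf : d ≤ n / 2
  · calc (Δ d n : ℝ) ≤ Δ (d - 1) (n - 1) + 2 * Δ d (n / 2) + 2 := by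
          exact_mod_cast h1 d n hd hhalf
      _ ≤ kkBound (d - 1) n + 2 * kkBound d (n / 2 : ℝ) + 2 := by
          gcongr
          exact (ih (n / 2) (by omega) d hd hhalf).trans
            (kkBound_mono_right (by linarith) (Nat.cast_nonneg _) Nat.cast_div_le)
      _ ≤ kkBound d n := kkBound_recurrence hd' (by exact_mod_cast (by omega : 2 * d ≤ n))
  · calc (Δ d n : ℝ) ≤ Δ (d - 1) (n - 1) := by exact_mod_cast h2 d n hlt.le (by omega) hd
      _ ≤ kkBound (d - 1) n := hpred
      _ ≤ kkBound d n := kkBound_mono_left (by linarith) (by linarith) hn'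

theorem stmt_6 (Δ : ℕ → ℕ → ℕ)
    (hmono : ∀ d n m, n ≤ m → Δ d n ≤ Δ d m)
    (h1 : ∀ d n, 2 ≤ d → d ≤ n / 2 → Δ d n ≤ Δ (d - 1) (n - 1) + 2 * Δ d (n / 2) + 2)
    (h2 : ∀ d n, d ≤ n → n < 2 * d → 2 ≤ d → Δ d n ≤ Δ (d - 1) (n - 1))
    (h3 : ∀ d, Δ d d = 0)
    (h4 : ∀ n, 2 ≤ n → Δ 1 n ≤ 1) :
    ∀ d n, 2 ≤ d → d ≤ n → (Δ d n : ℝ) ≤ (n : ℝ) ^ (Real.logb 2 d + 2) :=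
  stmt_6_general Δ h1 h2 h3 h4
end

section
/- Let Δ : ℕ → ℕ → ℕ satisfy Δ(d, n) ≤ Δ(d-1, n-1) whenever d ≤ n < 2d and d ≥ 2, and Δ(1, n) ≤ 1 for all n ≥ 1 with Δ(1,1) = 0. If additionally Δ(d', n') ≤ (n'-d')^(log₂ d') holds for all pairs with d' + n' < d + n, then Δ(d, n) ≤ (n-d)^(log₂ d) whenever d ≤ n < 2d. -/
theorem Nat.cast_sub_sub_cast_sub {R : Type*} [AddGroupWithOne R] {m n k : ℕ}
    (hm : k ≤ m) (hn : k ≤ n) : ((n - k : ℕ) : R) - ((m - k : ℕ) : R) = n - m := by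
  rw [Nat.cast_sub hm, Nat.cast_sub hn, sub_sub_sub_cancel_right]

theorem Real.rpow_logb_pred_le_rpow_logb {x : ℝ} (hx : 1 ≤ x) {d : ℕ} (hd : 2 ≤ d) :
    x ^ Real.logb 2 (d - 1 : ℕ) ≤ x ^ Real.logb 2 d := by
  apply Real.rpow_le_rpow_of_exponent_le hx
  have hpos : (0 : ℝ) < (d - 1 : ℕ) := by exact_mod_cast (by omega : 0 < d - 1)
  gcongr
  · norm_num
  · exact_mod_cast Nat.sub_le d 1

theorem stmt_10_general (Δ : ℕ → ℕ → ℕ) (d n : ℕ)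
    (h2 : ∀ d' n', d' ≤ n' → n' < 2 * d' → 2 ≤ d' → Δ d' n' ≤ Δ (d' - 1) (n' - 1))
    (hdd : ∀ k, Δ k k = 0)
    (ih : ∀ d' n', d' + n' < d + n → 1 ≤ d' → d' ≤ n' →
      (Δ d' n' : ℝ) ≤ ((n' : ℝ) - d') ^ (Real.logb 2 d'))
    (hdn : d ≤ n) (hn : n < 2 * d) :
    (Δ d n : ℝ) ≤ ((n : ℝ) - d) ^ (Real.logb 2 d) := by
  rcases hdn.eq_or_lt with rfl | hlt
  · rw [hdd, sub_self, Nat.cast_zero]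
    exact Real.rpow_nonneg le_rfl _
  have hd : 2 ≤ d := by omega
  have hgap : (1 : ℝ) ≤ n - d := by
    have : (d : ℝ) + 1 ≤ n := by exact_mod_cast hlt
    linarith
  calc (Δ d n : ℝ) ≤ Δ (d - 1) (n - 1) := by exact_mod_cast h2 d n hdn hn hd
    _ ≤ (((n - 1 : ℕ) : ℝ) - (d - 1 : ℕ)) ^ Real.logb 2 (d - 1 : ℕ) :=
      ih (d - 1) (n - 1) (by omega) (by omega) (by omega)
    _ = ((n : ℝ) - d) ^ Real.logb 2 (d - 1 : ℕ) := by
      rw [Nat.cast_sub_sub_cast_sub (by omega) (by omega)]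
    _ ≤ ((n : ℝ) - d) ^ Real.logb 2 d := Real.rpow_logb_pred_le_rpow_logb hgap hd

theorem stmt_10 (Δ : ℕ → ℕ → ℕ) (d n : ℕ)
    (h2 : ∀ d' n', d' ≤ n' → n' < 2 * d' → 2 ≤ d' → Δ d' n' ≤ Δ (d' - 1) (n' - 1))
    (h1 : ∀ n', 1 ≤ n' → Δ 1 n' ≤ 1)
    (h11 : Δ 1 1 = 0)
    (hdd : ∀ k, Δ k k = 0)
    (ih : ∀ d' n', d' + n' < d + n → 1 ≤ d' → d' ≤ n' →
      (Δ d' n' : ℝ) ≤ ((n' : ℝ) - d') ^ (Real.logb 2 d'))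
    (hdn : d ≤ n) (hn : n < 2 * d) :
    (Δ d n : ℝ) ≤ ((n : ℝ) - d) ^ (Real.logb 2 d) :=
  stmt_10_general Δ d n h2 hdd ih hdn hn
end
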